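/- One-sided concentration for a normal sequence (upper tail): Let p be a probability measure on a measurable space 𝒳 and k a measurable kernel with 0 ≤ k(x,y) ≤ K. Let m ≥ 2, let X and Y be two independent i.i.d. m-samples from p, and let δ > 0. Then P( MMD_u²[X,Y] > δ ) ≤ exp( − m δ² / (16K²) ). -/

import Mathlib

open MeasureTheory ProbabilityTheory Filter

noncomputable def mmdSq {𝓧 : Type*} [MeasurableSpace 𝓧]
    (κ : 𝓧 → 𝓧 → ℝ) (p q : Measure 𝓧) : ℝ :=
  (∫ x, ∫ x', κ x x' ∂p ∂p) - 2 * (∫ x, ∫ y, κ x y ∂q ∂p)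
    + (∫ y, ∫ y', κ y y' ∂q ∂q)

noncomputable def mmdU {𝓧 : Type*} (κ : 𝓧 → 𝓧 → ℝ)
    {ι₁ ι₂ : Type*} [Fintype ι₁] [Fintype ι₂] [DecidableEq ι₁] [DecidableEq ι₂]
    (X : ι₁ → 𝓧) (Y : ι₂ → 𝓧) : ℝ :=
  (1 / ((Fintype.card ι₁ : ℝ) * ((Fintype.card ι₁ : ℝ) - 1))) *
      ∑ i : ι₁, ∑ j ∈ Finset.univ.erase i, κ (X i) (X j)
    + (1 / ((Fintype.card ι₂ : ℝ) * ((Fintype.card ι₂ : ℝ) - 1))) *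
      ∑ i : ι₂, ∑ j ∈ Finset.univ.erase i, κ (Y i) (Y j)
    - (2 / ((Fintype.card ι₁ : ℝ) * (Fintype.card ι₂ : ℝ))) *
      ∑ i : ι₁, ∑ j : ι₂, κ (X i) (Y j)

/-!
McDiarmid's inequality does all the work. View the two samples as one sample
`w : Fin m ⊕ Fin m → 𝓧` from the product measure. Since `0 ≤ κ ≤ K`, changing one coordinate
moves `MMD_u²` by at most `4K/m`: it moves `2(m-1)` terms of the within-sample sum, weighted
`1/(m(m-1))`, and `m` terms of the cross sum, weighted `2/m²`, each by at most `K`. So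
`MMD_u²` minus its mean is sub-Gaussian with variance proxy `2m · (2K/m)² = 8K²/m`. The mean is
zero because every pair of distinct coordinates has law `p ⊗ p`, and the Chernoff bound gives
`exp(-δ²/(2 · 8K²/m))`.
McDiarmid itself is proved by induction on the number of coordinates, with Hoeffding's lemma
applied to the first coordinate conditionally on the others.
-/

open Real Finset Function
open scoped NNReal

section BoundedDifferences

variable {ι α : Type*} [DecidableEq ι]

def HasBoundedDifferences (f : (ι → α) → ℝ) (c : ι → ℝ) : Prop :=
  ∀ (w : ι → α) (i : ι) (z : α), f (update w i z) - f w ≤ c i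

variable {f : (ι → α) → ℝ} {c : ι → ℝ}

lemma HasBoundedDifferences.mono (hf : HasBoundedDifferences f c) {c' : ι → ℝ}
    (hc : ∀ i, c i ≤ c' i) : HasBoundedDifferences f c' :=
  fun w i z => (hf w i z).trans (hc i)

lemma HasBoundedDifferences.sub_le_sum [Fintype ι] (hf : HasBoundedDifferences f c)
    (w w' : ι → α) : f w' - f w ≤ ∑ i, c i := by
  suffices ∀ s : Finset ι, f (s.piecewise w' w) - f w ≤ ∑ i ∈ s, c i by
    simpa using this univ
  intro s
  induction s using Finset.induction_on with
  | empty => simp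
  | insert a s ha ih =>
    rw [Finset.piecewise_insert, Finset.sum_insert ha]
    linarith [hf (s.piecewise w' w) a (w' a)]

lemma HasBoundedDifferences.integral {β : Type*} [MeasurableSpace β] (μ : Measure β)
    [IsProbabilityMeasure μ] {F : β → (ι → α) → ℝ} (hF : ∀ x, HasBoundedDifferences (F x) c)
    (hint : ∀ w, Integrable (fun x => F x w) μ) :
    HasBoundedDifferences (fun w => ∫ x, F x w ∂μ) c := fun w i z => by
  rw [← integral_sub (hint _) (hint _)]
  calc ∫ x, (F x (update w i z) - F x w) ∂μ ≤ ∫ _, c i ∂μ :=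
        integral_mono ((hint _).sub (hint _)) (integrable_const _) fun x => hF x w i z
    _ = c i := by simp

end BoundedDifferences

lemma HasBoundedDifferences.comp_cons {α : Type*} {n : ℕ} {f : (Fin (n + 1) → α) → ℝ}
    {c : Fin (n + 1) → ℝ} (hf : HasBoundedDifferences f c) (x : α) :
    HasBoundedDifferences (fun v => f (Fin.cons x v)) (fun j => c j.succ) := fun w j z => by
  simpa only [Fin.cons_update] using hf (Fin.cons x w) j.succ z

lemma exists_forall_mem_Icc_of_forall_sub_le {β : Type*} {g : β → ℝ} {c : ℝ}
    (h : ∀ x y, g x - g y ≤ c) : ∃ a, ∀ x, g x ∈ Set.Icc a (a + c) := by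
  cases isEmpty_or_nonempty β with
  | inl _ => exact ⟨0, isEmptyElim⟩
  | inr _ =>
    obtain ⟨x₀⟩ := ‹Nonempty β›
    have hbdd : BddBelow (Set.range g) :=
      ⟨g x₀ - c, by rintro _ ⟨x, rfl⟩; linarith [h x₀ x]⟩
    refine ⟨⨅ x, g x, fun x => ⟨ciInf_le hbdd x, ?_⟩⟩
    have : g x - c ≤ ⨅ y, g y := le_ciInf fun y => by linarith [h x y]
    linarith

section Subgaussian

variable {β γ : Type*} [MeasurableSpace β] [MeasurableSpace γ] {μ : Measure β} {ν : Measure γ}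
  {g : β → ℝ}

lemma integrable_of_forall_sub_le [IsFiniteMeasure μ] (hg : AEMeasurable g μ) {c : ℝ}
    (h : ∀ x y, g x - g y ≤ c) : Integrable g μ := by
  obtain ⟨a, ha⟩ := exists_forall_mem_Icc_of_forall_sub_le h
  exact .of_mem_Icc _ _ hg (ae_of_all _ ha)

lemma integrable_exp_mul_of_forall_sub_le [IsFiniteMeasure μ] (hg : AEMeasurable g μ) {c : ℝ}
    (h : ∀ x y, g x - g y ≤ c) (t : ℝ) : Integrable (fun x => exp (t * g x)) μ := by
  obtain ⟨a, ha⟩ := exists_forall_mem_Icc_of_forall_sub_le h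
  exact integrable_exp_mul_of_mem_Icc hg (ae_of_all _ ha)

lemma hasSubgaussianMGF_sub_integral_of_forall_sub_le [IsProbabilityMeasure μ]
    (hg : AEMeasurable g μ) {c : ℝ≥0} (h : ∀ x y, g x - g y ≤ c) :
    HasSubgaussianMGF (fun x => g x - ∫ y, g y ∂μ) ((c / 2) ^ 2) μ := by
  obtain ⟨a, ha⟩ := exists_forall_mem_Icc_of_forall_sub_le h
  simpa using hasSubgaussianMGF_of_mem_Icc hg (ae_of_all _ ha)

lemma ProbabilityTheory.HasSubgaussianMGF.of_prod [SFinite μ] [SFinite ν] {F : β × γ → ℝ}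
    (G : γ → ℝ) {a b : ℝ≥0} (hF : ∀ t, Integrable (fun z => exp (t * F z)) (μ.prod ν))
    (hx : ∀ y, HasSubgaussianMGF (fun x => F (x, y) - G y) a μ)
    (hy : HasSubgaussianMGF G b ν) :
    HasSubgaussianMGF F (a + b) (μ.prod ν) where
  integrable_exp_mul := hF
  mgf_le t := by
    have hsplit : ∀ y, ∫ x, exp (t * F (x, y)) ∂μ
        = exp (t * G y) * mgf (fun x => F (x, y) - G y) μ t := fun y => by
      rw [mgf, ← integral_const_mul]
      congr with x
      rw [← exp_add]
      ring_nf
    calc mgf F (μ.prod ν) t = ∫ y, ∫ x, exp (t * F (x, y)) ∂μ ∂ν :=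
          integral_prod_symm _ (hF t)
      _ ≤ ∫ y, exp (t * G y) * exp (a * t ^ 2 / 2) ∂ν := by
        refine integral_mono (hF t).integral_prod_right ((hy.integrable_exp_mul t).mul_const _)
          fun y => ?_
        rw [hsplit]
        exact mul_le_mul_of_nonneg_left ((hx y).mgf_le t) (exp_pos _).le
      _ = mgf G ν t * exp (a * t ^ 2 / 2) := integral_mul_const _ _
      _ ≤ exp (b * t ^ 2 / 2) * exp (a * t ^ 2 / 2) := by gcongr; exact hy.mgf_le t
      _ = exp (↑(a + b) * t ^ 2 / 2) := by rw [← exp_add]; push_cast; ring_nf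

lemma ProbabilityTheory.HasSubgaussianMGF.measure_gt_le [IsFiniteMeasure μ] {c : ℝ≥0}
    (h : HasSubgaussianMGF g c μ) {ε : ℝ} (hε : 0 ≤ ε) :
    μ {x | ε < g x} ≤ ENNReal.ofReal (exp (-ε ^ 2 / (2 * c))) :=
  calc μ {x | ε < g x} ≤ μ {x | ε ≤ g x} := measure_mono fun x (hx : ε < g x) => hx.le
    _ = ENNReal.ofReal (μ.real {x | ε ≤ g x}) :=
        (ofReal_measureReal (measure_ne_top _ _)).symm
    _ ≤ ENNReal.ofReal (exp (-ε ^ 2 / (2 * c))) :=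
        ENNReal.ofReal_le_ofReal (h.measure_ge_le hε)

end Subgaussian

section McDiarmid

variable {𝓧 : Type*} [MeasurableSpace 𝓧]

theorem HasBoundedDifferences.hasSubgaussianMGF_fin :
    ∀ {n : ℕ} (μ : Fin n → Measure 𝓧) [∀ i, IsProbabilityMeasure (μ i)]
      {f : (Fin n → 𝓧) → ℝ} {c : Fin n → ℝ≥0}, Measurable f →
      HasBoundedDifferences f (fun i => c i) →
      HasSubgaussianMGF (fun w => f w - ∫ v, f v ∂Measure.pi μ) (∑ i, (c i / 2) ^ 2)
        (Measure.pi μ)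
  | 0, μ, _, f, c, _, _ => by
    have hzero : (fun w => f w - ∫ v, f v ∂Measure.pi μ) = fun _ => 0 := by
      ext w
      simp [integral_unique, Subsingleton.elim w default]
    simp [hzero, HasSubgaussianMGF.fun_zero]
  | n + 1, μ, _, f, c, hf, hfc => by
    set ν := Measure.pi μ
    set νtail := Measure.pi fun j : Fin n => μ j.succ
    set e := MeasurableEquiv.piFinSuccAbove (fun _ : Fin (n + 1) => 𝓧) 0
    have he : MeasurePreserving e ν ((μ 0).prod νtail) := by
      simpa only [Fin.succAbove_zero] using measurePreserving_piFinSuccAbove μ 0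
    have he_symm : ∀ x v, e.symm (x, v) = Fin.cons x v := fun x v => by
      simp [e, MeasurableEquiv.piFinSuccAbove, Fin.insertNthEquiv_zero, Fin.consEquiv]
    have hfe : Measurable fun z => f (e.symm z) := hf.comp e.symm.measurable
    have hfe_osc : ∀ z z', f (e.symm z) - f (e.symm z') ≤ ∑ i, (c i : ℝ) :=
      fun z z' => hfc.sub_le_sum _ _
    have hosc : ∀ v x y, f (Fin.cons x v) - f (Fin.cons y v) ≤ c 0 := fun v x y => by
      simpa only [Fin.update_cons_zero] using hfc (Fin.cons y v) 0 x
    have hint : ∀ v, Integrable (fun x => f (Fin.cons x v)) (μ 0) := fun v =>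
      integrable_of_forall_sub_le (by simpa only [he_symm, Function.comp_def] using
        (hfe.comp measurable_prodMk_right).aemeasurable) (hosc v)
    set g := fun v => ∫ x, f (Fin.cons x v) ∂μ 0
    have hgm : Measurable g := by
      simpa only [he_symm] using hfe.stronglyMeasurable.integral_prod_left'.measurable
    have hgc : HasBoundedDifferences g (fun j => c j.succ) :=
      HasBoundedDifferences.integral (μ 0) (fun x => hfc.comp_cons x) hint
    have hE : ∫ w, f w ∂ν = ∫ v, g v ∂νtail := by
      rw [← he.symm.integral_comp', integral_prod_symm _
        (integrable_of_forall_sub_le hfe.aemeasurable hfe_osc)]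
      simp only [he_symm, g]
    have key : HasSubgaussianMGF (fun z => f (e.symm z) - ∫ w, f w ∂ν)
        ((c 0 / 2) ^ 2 + ∑ j : Fin n, (c j.succ / 2) ^ 2) ((μ 0).prod νtail) := by
      refine .of_prod (fun v => g v - ∫ w, f w ∂ν)
        (integrable_exp_mul_of_forall_sub_le (hfe.sub_const _).aemeasurable
          fun z z' => by simpa using hfe_osc z z') (fun v => ?_) ?_
      · refine (hasSubgaussianMGF_sub_integral_of_forall_sub_le
          (hint v).aemeasurable (hosc v)).congr (ae_of_all _ fun x => ?_)
        simp only [he_symm, g]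
        ring
      · rw [hE]
        exact hasSubgaussianMGF_fin (fun j => μ j.succ) hgm hgc
    rw [Fin.sum_univ_succ]
    rw [← he.map_eq] at key
    simpa [Function.comp_def] using key.of_map he.measurable.aemeasurable

theorem HasBoundedDifferences.hasSubgaussianMGF {ι : Type*} [Fintype ι] [DecidableEq ι]
    (μ : ι → Measure 𝓧) [∀ i, IsProbabilityMeasure (μ i)] {f : (ι → 𝓧) → ℝ} {c : ι → ℝ≥0}
    (hf : Measurable f) (hfc : HasBoundedDifferences f (fun i => c i)) :
    HasSubgaussianMGF (fun w => f w - ∫ v, f v ∂Measure.pi μ) (∑ i, (c i / 2) ^ 2)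
      (Measure.pi μ) := by
  set σ := (Fintype.equivFin ι).symm
  set E := MeasurableEquiv.piCongrLeft (fun _ : ι => 𝓧) σ
  have hE : MeasurePreserving E (Measure.pi fun k => μ (σ k)) (Measure.pi μ) :=
    measurePreserving_piCongrLeft μ σ
  have hE_apply : ∀ w, E w = w ∘ σ.symm := fun w => by
    ext i
    simp [E, MeasurableEquiv.coe_piCongrLeft, Equiv.piCongrLeft_apply]
  have hfc' : HasBoundedDifferences (fun w => f (E w)) (fun k => c (σ k)) := fun w k z => by
    simpa [hE_apply, Function.update_comp_equiv] using hfc (w ∘ σ.symm) (σ k) z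
  have key := hasSubgaussianMGF_fin (fun k => μ (σ k)) (f := fun w => f (E w))
    (hf.comp E.measurable) hfc'
  rw [hE.integral_comp' (g := f), ← hE.symm.map_eq] at key
  simpa [Function.comp_def, Equiv.sum_comp σ (fun i => (c i / 2) ^ 2)] using
    key.of_map E.symm.measurable.aemeasurable

end McDiarmid

-- No `0 < b` is needed: for `b = 0` the left side is `0` because `d / 0 = 0`. This covers
-- samples of size one, where `b = card - 1` vanishes.
lemma div_mul_le_mul_div_of_le_mul {n b c d x : ℝ} (hn : 0 ≤ n) (hb : 0 ≤ b) (hc : 0 ≤ c)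
    (hd : 0 ≤ d) (hx : x ≤ b * c) : d / (n * b) * x ≤ d * c / n :=
  calc d / (n * b) * x ≤ d / (n * b) * (b * c) := by gcongr
    _ = d * c / n * (b / b) := by ring
    _ ≤ d * c / n := mul_le_of_le_one_right (by positivity) (div_self_le_one b)

section UStatistic

variable {𝓧 : Type*} {κ : 𝓧 → 𝓧 → ℝ} {K : ℝ} {ι₁ ι₂ : Type*} [Fintype ι₁] [Fintype ι₂]
  [DecidableEq ι₁]

lemma sum_sum_erase_update_sub_le (hκ : ∀ x y x' y', κ x y - κ x' y' ≤ K) (X : ι₁ → 𝓧)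
    (a : ι₁) (z : 𝓧) :
    ∑ i, ∑ j ∈ univ.erase i, κ (update X a z i) (update X a z j)
      - ∑ i, ∑ j ∈ univ.erase i, κ (X i) (X j) ≤ 2 * ((Fintype.card ι₁ : ℝ) - 1) * K := by
  calc _ = ∑ i, ∑ j ∈ univ.erase i,
        (κ (update X a z i) (update X a z j) - κ (X i) (X j)) := by
        simp only [← sum_sub_distrib]
    _ ≤ ∑ i, ∑ j ∈ univ.erase i, ((if i = a then K else 0) + if j = a then K else 0) := by
        gcongr with i _ j hj
        by_cases hi : i = a
        · subst hi
          simp [(ne_of_mem_erase hj), hκ]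
        by_cases hja : j = a
        · subst hja
          simp [hi, hκ]
        · simp [hi, hja]
    _ = 2 * ((Fintype.card ι₁ : ℝ) - 1) * K := by
        have : 1 ≤ Fintype.card ι₁ := Fintype.card_pos_iff.2 ⟨a⟩
        simp [sum_add_distrib, sum_ite, filter_ne, card_erase_of_mem, Nat.cast_sub this]
        ring

lemma sum_sum_sub_sum_sum_update_le (hκ : ∀ x y x' y', κ x y - κ x' y' ≤ K) (X : ι₁ → 𝓧)
    (Y : ι₂ → 𝓧) (a : ι₁) (z : 𝓧) :
    ∑ i, ∑ j, κ (X i) (Y j) - ∑ i, ∑ j, κ (update X a z i) (Y j)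
      ≤ Fintype.card ι₂ * K := by
  calc _ = ∑ i, ∑ j, (κ (X i) (Y j) - κ (update X a z i) (Y j)) := by
        simp only [← sum_sub_distrib]
    _ ≤ ∑ i, ∑ j : ι₂, if i = a then K else 0 := by
        gcongr with i _ j
        by_cases hi : i = a
        · subst hi
          simp [hκ]
        · simp [hi]
    _ = Fintype.card ι₂ * K := by simp

variable [DecidableEq ι₂]

lemma mmdU_update_left_sub_le (hκ : ∀ x y x' y', κ x y - κ x' y' ≤ K) (X : ι₁ → 𝓧)
    (Y : ι₂ → 𝓧) (a : ι₁) (z : 𝓧) :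
    mmdU κ (update X a z) Y - mmdU κ X Y ≤ 4 * K / Fintype.card ι₁ := by
  have hK : 0 ≤ K := by simpa using hκ z z z z
  have hn : (1 : ℝ) ≤ Fintype.card ι₁ := by exact_mod_cast Fintype.card_pos_iff.2 ⟨a⟩
  have hwithin := div_mul_le_mul_div_of_le_mul (n := Fintype.card ι₁) (b := Fintype.card ι₁ - 1)
    (c := 2 * K) (d := 1) (by linarith) (by linarith) (by linarith) zero_le_one
    ((sum_sum_erase_update_sub_le hκ X a z).trans_eq (by ring))
  have hcross := div_mul_le_mul_div_of_le_mul (n := Fintype.card ι₁) (d := 2) (by linarith)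
    (Nat.cast_nonneg _) hK zero_le_two (sum_sum_sub_sum_sum_update_le hκ X Y a z)
  unfold mmdU
  linear_combination hwithin + hcross

lemma mmdU_update_right_sub_le (hκ : ∀ x y x' y', κ x y - κ x' y' ≤ K) (X : ι₁ → 𝓧)
    (Y : ι₂ → 𝓧) (a : ι₂) (z : 𝓧) :
    mmdU κ X (update Y a z) - mmdU κ X Y ≤ 4 * K / Fintype.card ι₂ := by
  have hK : 0 ≤ K := by simpa using hκ z z z z
  have hn : (1 : ℝ) ≤ Fintype.card ι₂ := by exact_mod_cast Fintype.card_pos_iff.2 ⟨a⟩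
  have hwithin := div_mul_le_mul_div_of_le_mul (n := Fintype.card ι₂) (b := Fintype.card ι₂ - 1)
    (c := 2 * K) (d := 1) (by linarith) (by linarith) (by linarith) zero_le_one
    ((sum_sum_erase_update_sub_le hκ Y a z).trans_eq (by ring))
  have hswap := sum_sum_sub_sum_sum_update_le (κ := flip κ) (fun x y x' y' => hκ y x y' x')
    Y X a z
  rw [sum_comm, sum_comm (f := fun i j => flip κ (update Y a z i) (X j))] at hswap
  dsimp only [flip] at hswap
  have hcross := div_mul_le_mul_div_of_le_mul (n := Fintype.card ι₂) (d := 2) (by linarith)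
    (Nat.cast_nonneg _) hK zero_le_two hswap
  unfold mmdU
  linear_combination hwithin + hcross

lemma hasBoundedDifferences_mmdU (hκ : ∀ x y x' y', κ x y - κ x' y' ≤ K) :
    HasBoundedDifferences (fun w : ι₁ ⊕ ι₂ → 𝓧 => mmdU κ (w ∘ Sum.inl) (w ∘ Sum.inr))
      (Sum.elim (fun _ => 4 * K / Fintype.card ι₁) (fun _ => 4 * K / Fintype.card ι₂)) := by
  rintro w (a | a) z
  · simpa [update_comp_eq_of_injective _ Sum.inl_injective, update_comp_eq_of_forall_ne]
      using mmdU_update_left_sub_le hκ (w ∘ Sum.inl) (w ∘ Sum.inr) a z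
  · simpa [update_comp_eq_of_injective _ Sum.inr_injective, update_comp_eq_of_forall_ne]
      using mmdU_update_right_sub_le hκ (w ∘ Sum.inl) (w ∘ Sum.inr) a z

end UStatistic

section Expectation

variable {𝓧 : Type*} [MeasurableSpace 𝓧] (p : Measure 𝓧) [IsProbabilityMeasure p]
  {ι : Type*} [Fintype ι] {κ : 𝓧 → 𝓧 → ℝ}

lemma map_pi_eval_pair {a b : ι} (hab : a ≠ b) :
    (Measure.pi fun _ : ι => p).map (fun w => (w a, w b)) = p.prod p := by
  have hind : IndepFun (fun w : ι → 𝓧 => w a) (fun w => w b) (Measure.pi fun _ => p) :=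
    (iIndepFun_pi (X := fun _ x => x) fun _ => aemeasurable_id).indepFun hab
  rw [hind.map_prod_eq_prod_map_map (measurable_pi_apply a).aemeasurable
    (measurable_pi_apply b).aemeasurable, (measurePreserving_eval _ a).map_eq,
    (measurePreserving_eval _ b).map_eq]

lemma integral_pi_eval_pair (hκ : Integrable (Function.uncurry κ) (p.prod p)) {a b : ι}
    (hab : a ≠ b) :
    ∫ w, κ (w a) (w b) ∂(Measure.pi fun _ : ι => p)
      = ∫ z, Function.uncurry κ z ∂(p.prod p) := by
  rw [← map_pi_eval_pair p hab, integral_map (by fun_prop)]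
  · rfl
  · rw [map_pi_eval_pair p hab]; exact hκ.aestronglyMeasurable

lemma integrable_pi_eval_pair (hκ : Integrable (Function.uncurry κ) (p.prod p)) {a b : ι}
    (hab : a ≠ b) : Integrable (fun w => κ (w a) (w b)) (Measure.pi fun _ : ι => p) := by
  rw [← map_pi_eval_pair p hab] at hκ
  exact hκ.comp_measurable (by fun_prop)

lemma integral_sum_sum_erase_eq (hκ : Integrable (Function.uncurry κ) (p.prod p))
    {ι' : Type*} [Fintype ι'] [DecidableEq ι'] {e : ι' → ι} (he : Function.Injective e) :
    ∫ w, ∑ i, ∑ j ∈ univ.erase i, κ (w (e i)) (w (e j)) ∂(Measure.pi fun _ : ι => p)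
      = Fintype.card ι' * (Fintype.card ι' - 1) * ∫ z, Function.uncurry κ z ∂(p.prod p) := by
  have hne : ∀ i, ∀ j ∈ univ.erase i, e i ≠ e j := fun i j hj =>
    he.ne (ne_of_mem_erase hj).symm
  rw [integral_finsetSum _ fun i _ => integrable_finsetSum _ fun j hj =>
    integrable_pi_eval_pair p hκ (hne i j hj)]
  simp_rw [integral_finsetSum _ fun j hj => integrable_pi_eval_pair p hκ (hne _ j hj)]
  rw [sum_congr rfl fun i _ => sum_congr rfl fun j hj =>
    integral_pi_eval_pair p hκ (hne i j hj)]
  simp only [sum_const, card_erase_of_mem (mem_univ _), card_univ, nsmul_eq_mul]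
  obtain h | h := Nat.eq_zero_or_pos (Fintype.card ι')
  · simp [h]
  · rw [Nat.cast_sub h]
    ring

lemma integral_sum_sum_eq (hκ : Integrable (Function.uncurry κ) (p.prod p))
    {ι₁ ι₂ : Type*} [Fintype ι₁] [Fintype ι₂] {e₁ : ι₁ → ι} {e₂ : ι₂ → ι}
    (he : ∀ i j, e₁ i ≠ e₂ j) :
    ∫ w, ∑ i, ∑ j, κ (w (e₁ i)) (w (e₂ j)) ∂(Measure.pi fun _ : ι => p)
      = Fintype.card ι₁ * Fintype.card ι₂ * ∫ z, Function.uncurry κ z ∂(p.prod p) := by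
  rw [integral_finsetSum _ fun i _ => integrable_finsetSum _ fun j _ =>
    integrable_pi_eval_pair p hκ (he i j)]
  simp_rw [integral_finsetSum _ fun j _ => integrable_pi_eval_pair p hκ (he _ j),
    integral_pi_eval_pair p hκ (he _ _)]
  simp
  ring

lemma integral_mmdU_eq_zero (hκ : Integrable (Function.uncurry κ) (p.prod p))
    {ι₁ ι₂ : Type*} [Fintype ι₁] [Fintype ι₂] [DecidableEq ι₁] [DecidableEq ι₂]
    (h₁ : 1 < Fintype.card ι₁) (h₂ : 1 < Fintype.card ι₂) :
    ∫ w, mmdU κ (w ∘ Sum.inl) (w ∘ Sum.inr) ∂(Measure.pi fun _ : ι₁ ⊕ ι₂ => p) = 0 := by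
  have hI : ∀ a b : ι₁ ⊕ ι₂, a ≠ b →
      Integrable (fun w : ι₁ ⊕ ι₂ → 𝓧 => κ (w a) (w b)) (Measure.pi fun _ => p) :=
    fun a b hab => integrable_pi_eval_pair p hκ hab
  have hW₁ : Integrable (fun w : ι₁ ⊕ ι₂ → 𝓧 =>
      ∑ i, ∑ j ∈ univ.erase i, κ (w (.inl i)) (w (.inl j))) (Measure.pi fun _ => p) :=
    integrable_finsetSum _ fun i _ => integrable_finsetSum _ fun j hj =>
      hI _ _ (Sum.inl_injective.ne (ne_of_mem_erase hj).symm)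
  have hW₂ : Integrable (fun w : ι₁ ⊕ ι₂ → 𝓧 =>
      ∑ i, ∑ j ∈ univ.erase i, κ (w (.inr i)) (w (.inr j))) (Measure.pi fun _ => p) :=
    integrable_finsetSum _ fun i _ => integrable_finsetSum _ fun j hj =>
      hI _ _ (Sum.inr_injective.ne (ne_of_mem_erase hj).symm)
  have hC : Integrable (fun w : ι₁ ⊕ ι₂ → 𝓧 =>
      ∑ i, ∑ j, κ (w (.inl i)) (w (.inr j))) (Measure.pi fun _ => p) :=
    integrable_finsetSum _ fun i _ => integrable_finsetSum _ fun j _ => hI _ _ Sum.inl_ne_inr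
  have hn₁ : (1 : ℝ) < Fintype.card ι₁ := by exact_mod_cast h₁
  have hn₂ : (1 : ℝ) < Fintype.card ι₂ := by exact_mod_cast h₂
  unfold mmdU
  simp only [Function.comp_apply]
  rw [integral_sub, integral_add, integral_const_mul, integral_const_mul, integral_const_mul,
    integral_sum_sum_erase_eq p hκ Sum.inl_injective,
    integral_sum_sum_erase_eq p hκ Sum.inr_injective,
    integral_sum_sum_eq p hκ fun _ _ => Sum.inl_ne_inr]
  · field_simp [(by linarith : (Fintype.card ι₁ : ℝ) - 1 ≠ 0),
      (by linarith : (Fintype.card ι₂ : ℝ) - 1 ≠ 0)]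
    ring
  · exact hW₁.const_mul _
  · exact hW₂.const_mul _
  · exact (hW₁.const_mul _).add (hW₂.const_mul _)
  · exact hC.const_mul _

end Expectation

lemma Measurable.mmdU {𝓧 α : Type*} [MeasurableSpace 𝓧] [MeasurableSpace α]
    {κ : 𝓧 → 𝓧 → ℝ} (hκ : Measurable (Function.uncurry κ)) {ι₁ ι₂ : Type*} [Fintype ι₁]
    [Fintype ι₂] [DecidableEq ι₁] [DecidableEq ι₂] {f : α → ι₁ → 𝓧} {g : α → ι₂ → 𝓧}
    (hf : Measurable f) (hg : Measurable g) : Measurable fun a => mmdU κ (f a) (g a) := by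
  unfold _root_.mmdU
  fun_prop

section TwoSample

variable {𝓧 : Type*} [MeasurableSpace 𝓧] (p : Measure 𝓧) [IsProbabilityMeasure p]
  {ι₁ ι₂ : Type*} [Fintype ι₁] [Fintype ι₂]

lemma measure_pair_mem_eq_pi_sum {Ω : Type*} [MeasurableSpace Ω] {P : Measure Ω}
    {X : Ω → ι₁ → 𝓧} {Y : Ω → ι₂ → 𝓧} (hX : Measurable X) (hY : Measurable Y)
    (hlaw : P.map (fun ω => (X ω, Y ω))
      = (Measure.pi fun _ : ι₁ => p).prod (Measure.pi fun _ : ι₂ => p))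
    {S : Set ((ι₁ → 𝓧) × (ι₂ → 𝓧))} (hS : MeasurableSet S) :
    P {ω | (X ω, Y ω) ∈ S}
      = Measure.pi (fun _ : ι₁ ⊕ ι₂ => p) {w | (w ∘ Sum.inl, w ∘ Sum.inr) ∈ S} := by
  change P ((fun ω => (X ω, Y ω)) ⁻¹' S) = _
  rw [← Measure.map_apply (hX.prodMk hY) hS, hlaw]
  exact ((measurePreserving_sumPiEquivProdPi fun _ => p).measure_preimage
    hS.nullMeasurableSet).symm

variable [DecidableEq ι₁] [DecidableEq ι₂]

theorem hasSubgaussianMGF_mmdU {κ : 𝓧 → 𝓧 → ℝ} {K : ℝ}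
    (hκ : Measurable (Function.uncurry κ)) (hb : ∀ x y, 0 ≤ κ x y ∧ κ x y ≤ K)
    (h₁ : 1 < Fintype.card ι₁) (h₂ : 1 < Fintype.card ι₂) :
    HasSubgaussianMGF (fun w : ι₁ ⊕ ι₂ → 𝓧 => mmdU κ (w ∘ Sum.inl) (w ∘ Sum.inr))
      (4 * K ^ 2 * (1 / Fintype.card ι₁ + 1 / Fintype.card ι₂)).toNNReal
      (Measure.pi fun _ => p) := by
  obtain ⟨x₀⟩ := nonempty_of_isProbabilityMeasure p
  have hK : 0 ≤ K := (hb x₀ x₀).1.trans (hb x₀ x₀).2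
  set c : ι₁ ⊕ ι₂ → ℝ≥0 := Sum.elim (fun _ => (4 * K / Fintype.card ι₁).toNNReal)
    (fun _ => (4 * K / Fintype.card ι₂).toNNReal)
  have hc : ∑ i, (c i / 2) ^ 2
      = (4 * K ^ 2 * (1 / Fintype.card ι₁ + 1 / Fintype.card ι₂)).toNNReal := by
    have hn₁ : (0 : ℝ) < Fintype.card ι₁ := by positivity
    have hn₂ : (0 : ℝ) < Fintype.card ι₂ := by positivity
    rw [← NNReal.coe_inj, Real.coe_toNNReal _ (by positivity), Fintype.sum_sum_type]
    simp only [c, Sum.elim_inl, Sum.elim_inr, sum_const, card_univ, nsmul_eq_mul]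
    push_cast [Real.coe_toNNReal _ (by positivity : 0 ≤ 4 * K / Fintype.card ι₁),
      Real.coe_toNNReal _ (by positivity : 0 ≤ 4 * K / Fintype.card ι₂)]
    field_simp
    ring
  have hosc : ∀ x y x' y', κ x y - κ x' y' ≤ K := fun x y x' y' => by
    linarith [(hb x y).2, (hb x' y').1]
  have hκp : Integrable (Function.uncurry κ) (p.prod p) :=
    .of_mem_Icc 0 K hκ.aemeasurable (ae_of_all _ fun z => hb z.1 z.2)
  have key := HasBoundedDifferences.hasSubgaussianMGF (fun _ => p) (c := c)
    (hκ.mmdU (by fun_prop) (by fun_prop))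
    ((hasBoundedDifferences_mmdU hosc).mono fun i => by
      cases i <;> exact Real.le_coe_toNNReal _)
  rw [integral_mmdU_eq_zero p hκp h₁ h₂, hc] at key
  simpa using key

end TwoSample

theorem normal_upper_tail_general
    {𝓧 : Type*} [MeasurableSpace 𝓧]
    (κ : 𝓧 → 𝓧 → ℝ) (K : ℝ)
    (hκ : Measurable (Function.uncurry κ)) (hb : ∀ x y, 0 ≤ κ x y ∧ κ x y ≤ K)
    (p : Measure 𝓧) [IsProbabilityMeasure p]
    {m : ℕ} (hm : 2 ≤ m)
    {Ω : Type*} [MeasurableSpace Ω] (P : Measure Ω)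
    (X : Ω → Fin m → 𝓧) (Y : Ω → Fin m → 𝓧)
    (hX : Measurable X) (hY : Measurable Y)
    (hlaw : Measure.map (fun ω => (X ω, Y ω)) P
      = (Measure.pi fun _ : Fin m => p).prod (Measure.pi fun _ : Fin m => p))
    (δ : ℝ) (hδ : 0 < δ) :
    P {ω | mmdU κ (X ω) (Y ω) > δ}
      ≤ ENNReal.ofReal (Real.exp (-(m : ℝ) * δ ^ 2 / (16 * K ^ 2))) := by
  have hm' : 1 < Fintype.card (Fin m) := by rw [Fintype.card_fin]; exact hm
  have hproxy : 2 * (4 * K ^ 2 * (1 / m + 1 / m) : ℝ) = 16 * K ^ 2 / m := by ring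
  have htail := (hasSubgaussianMGF_mmdU p hκ hb hm' hm').measure_gt_le hδ.le
  rw [Real.coe_toNNReal _ (by positivity), Fintype.card_fin] at htail
  calc P {ω | mmdU κ (X ω) (Y ω) > δ}
      = Measure.pi (fun _ => p)
          {w : Fin m ⊕ Fin m → 𝓧 | δ < mmdU κ (w ∘ Sum.inl) (w ∘ Sum.inr)} :=
        measure_pair_mem_eq_pi_sum p hX hY hlaw
          (measurableSet_lt measurable_const (hκ.mmdU measurable_fst measurable_snd))
    _ ≤ ENNReal.ofReal (exp (-δ ^ 2 / (2 * (4 * K ^ 2 * (1 / m + 1 / m) : ℝ)))) := htail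
    _ = ENNReal.ofReal (Real.exp (-(m : ℝ) * δ ^ 2 / (16 * K ^ 2))) := by
        rw [hproxy, div_div_eq_mul_div]
        ring_nf

/-- One-sided concentration for a normal sequence (upper tail). -/
theorem normal_upper_tail
    {𝓧 : Type*} [MeasurableSpace 𝓧]
    (κ : 𝓧 → 𝓧 → ℝ) (K : ℝ)
    (hκ : Measurable (Function.uncurry κ)) (hb : ∀ x y, 0 ≤ κ x y ∧ κ x y ≤ K)
    (p : Measure 𝓧) [IsProbabilityMeasure p]
    {m : ℕ} (hm : 2 ≤ m)
    {Ω : Type*} [MeasurableSpace Ω] (P : Measure Ω) [IsProbabilityMeasure P]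
    (X : Ω → Fin m → 𝓧) (Y : Ω → Fin m → 𝓧)
    (hX : Measurable X) (hY : Measurable Y)
    (hlaw : Measure.map (fun ω => (X ω, Y ω)) P
      = (Measure.pi fun _ : Fin m => p).prod (Measure.pi fun _ : Fin m => p))
    (δ : ℝ) (hδ : 0 < δ) :
    P {ω | mmdU κ (X ω) (Y ω) > δ}
      ≤ ENNReal.ofReal (Real.exp (-(m : ℝ) * δ ^ 2 / (16 * K ^ 2))) :=
  normal_upper_tail_general κ K hκ hb p hm P X Y hX hY hlaw δ hδ
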